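/- arXiv:2008.07107 — 5 statements merged into one kernel-verified Lean document; each statement's English description precedes it below -/
import Mathlib

section
/- For a standard normal random variable N and any y > 0, it holds that √(2/π) · exp(−y²/2)/(y + √(y²+4)) < P(N > y) ≤ √(2/π) · exp(−y²/2)/(y + √(y²+8/π)). -/
/-!
Write `φ` for the standard normal density and `Q(y) = P(N > y)`, so `Q' = -φ` and `φ' = -y φ`.
For `c > 0` compare `Q` with `B_c(y) = 2 φ(y) / (y + √(y² + c))` (`millsBound c`): one computes
`(Q - B_c)'(y) = φ(y) (y √(y² + c) - (y² + c - 2)) / (√(y² + c) (y + √(y² + c)))`,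
whose sign on `y > 0` (for `c ≥ 2`) is that of `(c - 2)² - (4 - c) y²`.
Both `Q` and `B_c` vanish at infinity. For `c = 4` the difference is strictly decreasing, hence
positive. For `c = 8/π` it first decreases and then increases, and it vanishes both at `0`
(as `Q(0) = 1/2 = B_{8/π}(0)`) and at infinity, hence it is nonpositive.
-/

open MeasureTheory ProbabilityTheory Real Set Filter Topology
open scoped NNReal

theorem AntitoneOn.le_of_tendsto_atTop {f : ℝ → ℝ} {a b y : ℝ} (hf : AntitoneOn f (Ici a))
    (hlim : Tendsto f atTop (𝓝 b)) (hy : a ≤ y) : b ≤ f y :=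
  le_of_tendsto hlim <| (eventually_ge_atTop y).mono fun _ hz => hf hy (hy.trans hz) hz

theorem MonotoneOn.le_of_tendsto_atTop {f : ℝ → ℝ} {a b y : ℝ} (hf : MonotoneOn f (Ici a))
    (hlim : Tendsto f atTop (𝓝 b)) (hy : a ≤ y) : f y ≤ b :=
  ge_of_tendsto hlim <| (eventually_ge_atTop y).mono fun _ hz => hf hy (hy.trans hz) hz

theorem hasDerivAt_integral_Ioi {E : Type*} [NormedAddCommGroup E] [NormedSpace ℝ E]
    [CompleteSpace E] {f : ℝ → E} {a : ℝ} (hf : Integrable f) (hfa : ContinuousAt f a) :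
    HasDerivAt (fun u => ∫ x in Ioi u, f x) (-f a) a := by
  have hsplit : (fun u => ∫ x in Ioi u, f x)
      = fun u => (∫ x in Ioi a, f x) - ∫ x in a..u, f x := by
    funext u
    rw [← intervalIntegral.integral_Ioi_sub_Ioi' hf.integrableOn hf.integrableOn, sub_sub_cancel]
  rw [hsplit]
  exact (intervalIntegral.integral_hasDerivAt_right hf.intervalIntegrable
    hf.aestronglyMeasurable.stronglyMeasurableAtFilter hfa).const_sub _

theorem tendsto_measureReal_Ioi_atTop (μ : Measure ℝ) [IsProbabilityMeasure μ] :
    Tendsto (fun y => μ.real (Ioi y)) atTop (𝓝 0) := by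
  have hcdf : (fun y => μ.real (Ioi y)) = fun y => 1 - cdf μ y := by
    funext y
    rw [← compl_Iic, measureReal_compl measurableSet_Iic, probReal_univ, cdf_eq_real]
  rw [hcdf, ← sub_self 1]
  exact tendsto_const_nhds.sub (tendsto_cdf_atTop μ)

theorem continuous_gaussianPDFReal (μ : ℝ) (v : ℝ≥0) : Continuous (gaussianPDFReal μ v) := by
  rw [gaussianPDFReal_def]
  fun_prop

theorem hasDerivAt_gaussianPDFReal (μ : ℝ) (v : ℝ≥0) (x : ℝ) :
    HasDerivAt (gaussianPDFReal μ v) (-((x - μ) / v) * gaussianPDFReal μ v x) x := by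
  have hexponent : HasDerivAt (fun y => -(y - μ) ^ 2 / (2 * (v : ℝ))) (-((x - μ) / v)) x :=
    ((((hasDerivAt_id' x).sub_const μ).pow 2).neg.div_const (2 * (v : ℝ))).congr_deriv
      (by push_cast; ring)
  exact ((hexponent.exp).const_mul (√(2 * π * v))⁻¹).congr_deriv
    (by rw [gaussianPDFReal]; ring)

theorem tendsto_gaussianPDFReal_atTop (μ : ℝ) (v : ℝ≥0) :
    Tendsto (gaussianPDFReal μ v) atTop (𝓝 0) := by
  rcases eq_or_ne v 0 with rfl | hv
  · rw [gaussianPDFReal_zero_var]; exact tendsto_const_nhds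
  have hexponent : Tendsto (fun x => -(x - μ) ^ 2 / (2 * (v : ℝ))) atTop atBot :=
    (tendsto_neg_atTop_atBot.comp ((tendsto_pow_atTop two_ne_zero).comp
      (tendsto_atTop_add_const_right _ (-μ) tendsto_id))).atBot_div_const (by positivity)
  rw [gaussianPDFReal_def]
  simpa only [mul_zero] using (tendsto_exp_comp_nhds_zero.2 hexponent).const_mul (√(2 * π * v))⁻¹

theorem hasDerivAt_gaussianReal_real_Ioi (μ : ℝ) {v : ℝ≥0} (hv : v ≠ 0) (y : ℝ) :
    HasDerivAt (fun y => (gaussianReal μ v).real (Ioi y)) (-gaussianPDFReal μ v y) y := by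
  have hintegral : (fun y => (gaussianReal μ v).real (Ioi y))
      = fun y => ∫ x in Ioi y, gaussianPDFReal μ v x := by
    funext y
    rw [measureReal_def, gaussianReal_apply_eq_integral μ hv,
      ENNReal.toReal_ofReal (setIntegral_nonneg measurableSet_Ioi fun x _ =>
        gaussianPDFReal_nonneg μ v x)]
  rw [hintegral]
  exact hasDerivAt_integral_Ioi (integrable_gaussianPDFReal μ v)
    (continuous_gaussianPDFReal μ v).continuousAt

theorem gaussianReal_real_Ioi_zero {v : ℝ≥0} (hv : v ≠ 0) :
    (gaussianReal 0 v).real (Ioi 0) = 1 / 2 := by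
  have := nullSingletonClass_gaussianReal (μ := 0) hv
  have hsymm : (gaussianReal 0 v).real (Ioi 0) = (gaussianReal 0 v).real (Iic 0) := by
    have hmap := gaussianReal_map_neg (μ := 0) (v := v)
    rw [neg_zero] at hmap
    calc (gaussianReal 0 v).real (Ioi 0)
        = ((gaussianReal 0 v).map (fun x => -x)).real (Ioi 0) := by rw [hmap]
      _ = (gaussianReal 0 v).real (Iio 0) := by
        rw [map_measureReal_apply (by fun_prop) measurableSet_Ioi]
        congr 1
        ext x
        simp
      _ = (gaussianReal 0 v).real (Iic 0) := measureReal_congr Iio_ae_eq_Iic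
  have hcompl := measureReal_compl (μ := gaussianReal 0 v) (measurableSet_Iic (a := (0 : ℝ)))
  rw [compl_Iic, probReal_univ] at hcompl
  linarith

theorem add_sqrt_sq_add_pos {c : ℝ} (hc : 0 < c) (y : ℝ) : 0 < y + √(y ^ 2 + c) := by
  have habs : |y| < √(y ^ 2 + c) := by
    rw [← sqrt_sq_eq_abs]
    exact sqrt_lt_sqrt (sq_nonneg y) (lt_add_of_pos_right _ hc)
  linarith [neg_abs_le y]

theorem mul_sqrt_sq_add_lt_iff {c y : ℝ} (hc : 2 ≤ c) (hy : 0 ≤ y) :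
    y * √(y ^ 2 + c) < y ^ 2 + c - 2 ↔ (4 - c) * y ^ 2 < (c - 2) ^ 2 := by
  have hs : √(y ^ 2 + c) ^ 2 = y ^ 2 + c := sq_sqrt (by positivity)
  rw [← sq_lt_sq₀ (by positivity) (by nlinarith), mul_pow, hs]
  constructor <;> intro h <;> nlinarith

theorem lt_mul_sqrt_sq_add_iff {c y : ℝ} (hc : 2 ≤ c) (hy : 0 ≤ y) :
    y ^ 2 + c - 2 < y * √(y ^ 2 + c) ↔ (c - 2) ^ 2 < (4 - c) * y ^ 2 := by
  have hs : √(y ^ 2 + c) ^ 2 = y ^ 2 + c := sq_sqrt (by positivity)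
  rw [← sq_lt_sq₀ (by nlinarith) (by positivity), mul_pow, hs]
  constructor <;> intro h <;> nlinarith

noncomputable def millsBound (c y : ℝ) : ℝ := 2 * gaussianPDFReal 0 1 y / (y + √(y ^ 2 + c))

noncomputable def millsGap (c y : ℝ) : ℝ := (gaussianReal 0 1).real (Ioi y) - millsBound c y

theorem millsBound_eq (c y : ℝ) :
    millsBound c y = √(2 / π) * exp (-y ^ 2 / 2) / (y + √(y ^ 2 + c)) := by
  have hsqrt : 2 * (√(2 * π))⁻¹ = √(2 / π) := by
    rw [← sqrt_sq (by positivity : 0 ≤ 2 * (√(2 * π))⁻¹), mul_pow, inv_pow,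
      sq_sqrt (by positivity)]
    field_simp
  rw [millsBound, gaussianPDFReal, ← mul_assoc, NNReal.coe_one, mul_one, mul_one, sub_zero, hsqrt]

theorem hasDerivAt_millsBound {c : ℝ} (hc : 0 < c) (y : ℝ) :
    HasDerivAt (millsBound c)
      (-(2 * gaussianPDFReal 0 1 y * (y * √(y ^ 2 + c) + 1)) / (√(y ^ 2 + c) * (y + √(y ^ 2 + c))))
      y := by
  have hs : 0 < √(y ^ 2 + c) := sqrt_pos.2 (by positivity)
  have hd := add_sqrt_sq_add_pos hc y
  have hsqrt : HasDerivAt (fun x => √(x ^ 2 + c)) (y / √(y ^ 2 + c)) y :=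
    (((hasDerivAt_pow 2 y).add_const c).sqrt (by positivity)).congr_deriv (by push_cast; ring)
  have hnum := (hasDerivAt_gaussianPDFReal 0 1 y).const_mul 2
  refine (hnum.div ((hasDerivAt_id' y).add hsqrt) hd.ne').congr_deriv ?_
  simp only [Pi.add_apply, NNReal.coe_one, sub_zero, div_one]
  field_simp
  ring

theorem hasDerivAt_millsGap {c : ℝ} (hc : 0 < c) (y : ℝ) :
    HasDerivAt (millsGap c)
      (gaussianPDFReal 0 1 y * (y * √(y ^ 2 + c) - (y ^ 2 + c - 2))
        / (√(y ^ 2 + c) * (y + √(y ^ 2 + c)))) y := by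
  have hs : 0 < √(y ^ 2 + c) := sqrt_pos.2 (by positivity)
  have hd := add_sqrt_sq_add_pos hc y
  refine ((hasDerivAt_gaussianReal_real_Ioi 0 one_ne_zero y).sub
    (hasDerivAt_millsBound hc y)).congr_deriv ?_
  have hsq : √(y ^ 2 + c) ^ 2 = y ^ 2 + c := sq_sqrt (by positivity)
  field_simp
  linear_combination (-gaussianPDFReal 0 1 y) * hsq

theorem tendsto_millsBound_atTop (c : ℝ) : Tendsto (millsBound c) atTop (𝓝 0) := by
  have hden : Tendsto (fun y => y + √(y ^ 2 + c)) atTop atTop :=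
    tendsto_atTop_mono (fun y => le_add_of_nonneg_right (sqrt_nonneg _)) tendsto_id
  have hlim := ((tendsto_gaussianPDFReal_atTop 0 1).const_mul 2).mul hden.inv_tendsto_atTop
  rw [mul_zero] at hlim
  exact hlim.congr fun y => (div_eq_mul_inv _ _).symm

theorem tendsto_millsGap_atTop (c : ℝ) : Tendsto (millsGap c) atTop (𝓝 0) := by
  have hlim := (tendsto_measureReal_Ioi_atTop (gaussianReal 0 1)).sub (tendsto_millsBound_atTop c)
  rwa [sub_zero] at hlim

theorem differentiable_millsGap {c : ℝ} (hc : 0 < c) : Differentiable ℝ (millsGap c) :=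
  fun y => (hasDerivAt_millsGap hc y).differentiableAt

theorem deriv_millsGap_neg {c y : ℝ} (hc : 2 ≤ c) (hy : 0 < y)
    (hcy : (4 - c) * y ^ 2 < (c - 2) ^ 2) : deriv (millsGap c) y < 0 := by
  have hs : 0 < √(y ^ 2 + c) := sqrt_pos.2 (by positivity)
  rw [(hasDerivAt_millsGap (by linarith) y).deriv]
  refine div_neg_of_neg_of_pos (mul_neg_of_pos_of_neg (gaussianPDFReal_pos 0 1 y one_ne_zero) ?_)
    (mul_pos hs (add_sqrt_sq_add_pos (by linarith) y))
  linarith [(mul_sqrt_sq_add_lt_iff hc hy.le).2 hcy]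

theorem deriv_millsGap_pos {c y : ℝ} (hc : 2 ≤ c) (hy : 0 < y)
    (hcy : (c - 2) ^ 2 < (4 - c) * y ^ 2) : 0 < deriv (millsGap c) y := by
  have hs : 0 < √(y ^ 2 + c) := sqrt_pos.2 (by positivity)
  rw [(hasDerivAt_millsGap (by linarith) y).deriv]
  refine div_pos (mul_pos (gaussianPDFReal_pos 0 1 y one_ne_zero) ?_)
    (mul_pos hs (add_sqrt_sq_add_pos (by linarith) y))
  linarith [(lt_mul_sqrt_sq_add_iff hc hy.le).2 hcy]

theorem millsGap_four_pos {y : ℝ} (hy : 0 ≤ y) : 0 < millsGap 4 y := by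
  have hanti : StrictAntiOn (millsGap 4) (Ici 0) := by
    refine strictAntiOn_of_deriv_neg (convex_Ici 0)
      (differentiable_millsGap (by norm_num)).continuous.continuousOn fun x hx => ?_
    rw [interior_Ici] at hx
    exact deriv_millsGap_neg (by norm_num) hx (by norm_num)
  calc 0 ≤ millsGap 4 (y + 1) :=
        hanti.antitoneOn.le_of_tendsto_atTop (tendsto_millsGap_atTop 4) (by linarith)
    _ < millsGap 4 y := hanti hy (mem_Ici.2 (by linarith)) (by linarith)

theorem millsGap_nonpos {c y : ℝ} (hc2 : 2 ≤ c) (hc4 : c < 4) (h0 : millsGap c 0 ≤ 0)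
    (hy : 0 ≤ y) : millsGap c y ≤ 0 := by
  -- the derivative changes sign at the positive root `Y` of `(c - 2)² = (4 - c) Y²`
  set Y := √((c - 2) ^ 2 / (4 - c))
  have hdiff := differentiable_millsGap (c := c) (by linarith)
  have hanti : StrictAntiOn (millsGap c) (Icc 0 Y) := by
    refine strictAntiOn_of_deriv_neg (convex_Icc 0 Y) hdiff.continuous.continuousOn
      fun x hx => ?_
    rw [interior_Icc] at hx
    have hxY := (lt_sqrt hx.1.le).1 hx.2
    exact deriv_millsGap_neg hc2 hx.1 (by rwa [lt_div_iff₀ (by linarith), mul_comm] at hxY)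
  have hmono : StrictMonoOn (millsGap c) (Ici Y) := by
    refine strictMonoOn_of_deriv_pos (convex_Ici Y) hdiff.continuous.continuousOn
      fun x hx => ?_
    rw [interior_Ici] at hx
    have hx0 : 0 < x := (sqrt_nonneg _).trans_lt hx
    have hxY := (sqrt_lt' hx0).1 hx
    exact deriv_millsGap_pos hc2 hx0 (by rwa [div_lt_iff₀ (by linarith), mul_comm] at hxY)
  rcases le_total y Y with hyY | hYy
  · exact (hanti.antitoneOn ⟨le_rfl, sqrt_nonneg _⟩ ⟨hy, hyY⟩ hy).trans h0
  · exact hmono.monotoneOn.le_of_tendsto_atTop (tendsto_millsGap_atTop c) hYy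

theorem millsGap_eight_div_pi_zero : millsGap (8 / π) 0 = 0 := by
  have hsqrt : √(8 / π) = 2 * √(2 / π) := by
    rw [show 8 / π = 2 ^ 2 * (2 / π) by ring, sqrt_mul' _ (by positivity), sqrt_sq zero_le_two]
  rw [millsGap, gaussianReal_real_Ioi_zero one_ne_zero, millsBound_eq]
  simp only [zero_pow two_ne_zero, zero_add, neg_zero, zero_div, exp_zero, mul_one, hsqrt]
  field_simp
  norm_num

/-- Gaussian tail bounds: for a standard normal `N` and any `y > 0`,
`√(2/π)·exp(−y²/2)/(y+√(y²+4)) < P(N > y) ≤ √(2/π)·exp(−y²/2)/(y+√(y²+8/π))`. -/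
theorem gaussian_tail_bound (y : ℝ) (hy : 0 < y) :
    Real.sqrt (2 / Real.pi) * Real.exp (-y ^ 2 / 2) / (y + Real.sqrt (y ^ 2 + 4))
      < ((gaussianReal 0 1) (Set.Ioi y)).toReal ∧
    ((gaussianReal 0 1) (Set.Ioi y)).toReal
      ≤ Real.sqrt (2 / Real.pi) * Real.exp (-y ^ 2 / 2)
          / (y + Real.sqrt (y ^ 2 + 8 / Real.pi)) := by
  have h8π : 2 ≤ 8 / π := by rw [le_div_iff₀ pi_pos]; linarith [pi_le_four]
  have h8π' : 8 / π < 4 := by rw [div_lt_iff₀ pi_pos]; linarith [pi_gt_three]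
  have hlower := millsGap_four_pos hy.le
  have hupper := millsGap_nonpos h8π h8π' millsGap_eight_div_pi_zero.le hy.le
  rw [millsGap, sub_pos, millsBound_eq] at hlower
  rw [millsGap, sub_nonpos, millsBound_eq] at hupper
  exact ⟨hlower, hupper⟩
end

section
/- For any t > 2, the standard normal quantile satisfies √(max(2 log t − log log t − C, 0)) ≤ Φ⁻¹(1 − 1/t) ≤ √(2 log t − log log t), where C = 2 log 4 + log π. -/
/-!
Write `s = log t` and `C = 2 log 4 + log π = log (16π)`. The Gaussian density at
`u = √(2s - log s)` is `φ(u) = √(s / 2π) / t`, so the Mills-ratio bound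
`1 - Φ(u) ≤ φ(u) / u` gives `1 - Φ(u) ≤ 1 / t`. At `l = √(2s - log s - C)` it is
`φ(l) = 2√(2s) / t`, and the reverse bound `1 - Φ(l) ≥ φ(l) / (1 + l)` together with
`1 + l ≤ 2√(2s)` gives `1 - Φ(l) ≥ 1 / t`. Since `Φ` is continuous and strictly increasing,
these two tail estimates place `Φ⁻¹(1 - 1/t)` between `l` and `u`.
-/

open MeasureTheory ProbabilityTheory Real Set

/-- The standard normal CDF. -/
noncomputable def Phi (y : ℝ) : ℝ := ((gaussianReal 0 1) (Set.Iic y)).toReal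

/-- The standard normal quantile function (inverse CDF). -/
noncomputable def PhiInv : ℝ → ℝ := Function.invFun Phi

open Filter Topology

noncomputable def phi (x : ℝ) : ℝ := (√(2 * π))⁻¹ * exp (-x ^ 2 / 2)

lemma gaussianPDFReal_zero_one : gaussianPDFReal 0 1 = phi := by
  ext x
  simp [gaussianPDFReal, phi]

lemma phi_pos (x : ℝ) : 0 < phi x := by
  unfold phi
  positivity

lemma integrable_phi : Integrable phi :=
  gaussianPDFReal_zero_one ▸ integrable_gaussianPDFReal 0 1

lemma integral_phi : ∫ x, phi x = 1 :=
  gaussianPDFReal_zero_one ▸ integral_gaussianPDFReal_eq_one 0 one_ne_zero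

lemma phi_neg (x : ℝ) : phi (-x) = phi x := by
  simp [phi]

lemma hasDerivAt_phi (x : ℝ) : HasDerivAt phi (-x * phi x) x := by
  have h : HasDerivAt (fun y : ℝ ↦ -y ^ 2 / 2) (-x) x :=
    (((hasDerivAt_id x).fun_pow 2).fun_neg.div_const 2).congr_deriv (by simp; ring)
  exact (h.exp.const_mul (√(2 * π))⁻¹).congr_deriv (by simp only [phi]; ring)

lemma tendsto_phi_atTop : Tendsto phi atTop (𝓝 0) := by
  unfold phi
  have h : Tendsto (fun x : ℝ ↦ -x ^ 2 / 2) atTop atBot :=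
    (tendsto_neg_atTop_atBot.comp (tendsto_pow_atTop two_ne_zero)).atBot_div_const two_pos
  simpa using (tendsto_exp_atBot.comp h).const_mul (√(2 * π))⁻¹

lemma Phi_eq_integral_Iic (x : ℝ) : Phi x = ∫ y in Iic x, phi y := by
  rw [Phi, gaussianReal_apply_eq_integral 0 one_ne_zero, gaussianPDFReal_zero_one,
    ENNReal.toReal_ofReal (setIntegral_nonneg measurableSet_Iic fun y _ ↦ (phi_pos y).le)]

lemma one_sub_Phi_eq_integral_Ioi (x : ℝ) : 1 - Phi x = ∫ y in Ioi x, phi y := by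
  rw [← integral_phi, Phi_eq_integral_Iic,
    ← integral_add_compl measurableSet_Iic integrable_phi, compl_Iic, add_sub_cancel_left]

lemma continuous_phi : Continuous phi := by
  unfold phi
  fun_prop

lemma hasDerivAt_Phi (x : ℝ) : HasDerivAt Phi (phi x) x := by
  have h := intervalIntegral.integral_hasDerivAt_right (a := 0) (b := x)
    integrable_phi.intervalIntegrable
    continuous_phi.aestronglyMeasurable.stronglyMeasurableAtFilter continuous_phi.continuousAt
  refine (h.const_add (Phi 0)).congr_of_eventuallyEq (Eventually.of_forall fun y ↦ ?_)
  dsimp only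
  rw [← intervalIntegral.integral_Iic_sub_Iic integrable_phi.integrableOn
    integrable_phi.integrableOn, ← Phi_eq_integral_Iic, ← Phi_eq_integral_Iic]
  ring

lemma strictMono_Phi : StrictMono Phi :=
  strictMono_of_deriv_pos fun x ↦ (hasDerivAt_Phi x).deriv ▸ phi_pos x

lemma continuous_Phi : Continuous Phi :=
  continuous_iff_continuousAt.2 fun x ↦ (hasDerivAt_Phi x).continuousAt

lemma Phi_eq_cdf : Phi = cdf (gaussianReal 0 1) := by
  ext x
  rw [cdf_eq_real, Phi, measureReal_def]

lemma Phi_zero : Phi 0 = 1 / 2 := by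
  have h : ∫ y in Ioi (0 : ℝ), phi y = ∫ y in Iic (0 : ℝ), phi y := by
    rw [← neg_zero, ← integral_comp_neg_Ioi, neg_zero]
    simp only [phi_neg]
  have := one_sub_Phi_eq_integral_Ioi 0
  rw [h, ← Phi_eq_integral_Iic] at this
  linarith

lemma Phi_PhiInv {p : ℝ} (hp0 : 0 < p) (hp1 : p < 1) : Phi (PhiInv p) = p := by
  have hrange : p ∈ range Phi := by
    rw [Phi_eq_cdf]
    exact mem_range_of_exists_le_of_exists_ge (Phi_eq_cdf ▸ continuous_Phi)
      ((tendsto_cdf_atBot _).eventually_le_const hp0).exists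
      ((tendsto_cdf_atTop _).eventually_const_le hp1).exists
  exact Function.invFun_eq hrange

lemma PhiInv_le_iff {p : ℝ} (hp0 : 0 < p) (hp1 : p < 1) (x : ℝ) :
    PhiInv p ≤ x ↔ p ≤ Phi x := by
  rw [← strictMono_Phi.le_iff_le, Phi_PhiInv hp0 hp1]

lemma le_PhiInv_iff {p : ℝ} (hp0 : 0 < p) (hp1 : p < 1) (x : ℝ) :
    x ≤ PhiInv p ↔ Phi x ≤ p := by
  rw [← strictMono_Phi.le_iff_le, Phi_PhiInv hp0 hp1]

-- On `(x, ∞)` we have `φ(y) ≤ y φ(y) / x`, and `y φ(y) = -φ'(y)` integrates exactly.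
lemma one_sub_Phi_le {x : ℝ} (hx : 0 < x) : 1 - Phi x ≤ phi x / x := by
  have hderiv : ∀ y ∈ Ici x, HasDerivAt (fun z ↦ -phi z) (y * phi y) y := fun y _ ↦
    (hasDerivAt_phi y).neg.congr_deriv (by ring)
  have hnonneg : ∀ y ∈ Ioi x, 0 ≤ y * phi y := fun y hy ↦
    mul_nonneg (hx.trans hy).le (phi_pos y).le
  have hlim : Tendsto (fun z ↦ -phi z) atTop (𝓝 0) := by simpa using tendsto_phi_atTop.neg
  have hint : ∫ y in Ioi x, y * phi y = phi x := by
    rw [integral_Ioi_of_hasDerivAt_of_nonneg' hderiv hnonneg hlim]; ring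
  rw [one_sub_Phi_eq_integral_Ioi, ← hint, ← integral_div]
  refine setIntegral_mono_on integrable_phi.integrableOn
    ((integrableOn_Ioi_deriv_of_nonneg' hderiv hnonneg hlim).div_const x) measurableSet_Ioi
    fun y hy ↦ ?_
  rw [le_div_iff₀ hx, mul_comm]
  exact mul_le_mul_of_nonneg_right (le_of_lt hy) (phi_pos y).le

-- `(φ / (1 + y))' = -φ (y² + y + 1) / (1 + y)² ≥ -φ` for `y ≥ 0`.
lemma phi_div_one_add_le_one_sub_Phi {x : ℝ} (hx : 0 ≤ x) : phi x / (1 + x) ≤ 1 - Phi x := by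
  set D : ℝ → ℝ := fun y ↦ (y ^ 2 + y + 1) / (1 + y) ^ 2 * phi y
  have hderiv : ∀ y ∈ Ici x, HasDerivAt (fun z ↦ -(phi z / (1 + z))) (D y) y := by
    intro y hy
    have hy1 : 1 + y ≠ 0 := by linarith [mem_Ici.1 hy]
    refine ((hasDerivAt_phi y).div ((hasDerivAt_id y).const_add 1) hy1).neg.congr_deriv ?_
    simp only [D, id]
    field_simp
    ring
  have hnonneg : ∀ y ∈ Ioi x, 0 ≤ D y := fun y hy ↦ by
    have := phi_pos y
    have : 0 ≤ y := hx.trans (le_of_lt hy)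
    positivity
  have hlim : Tendsto (fun z ↦ -(phi z / (1 + z))) atTop (𝓝 0) := by
    simpa using (tendsto_phi_atTop.div_atTop (tendsto_atTop_add_const_left _ 1 tendsto_id)).neg
  have hint : ∫ y in Ioi x, D y = phi x / (1 + x) := by
    rw [integral_Ioi_of_hasDerivAt_of_nonneg' hderiv hnonneg hlim]; ring
  rw [one_sub_Phi_eq_integral_Ioi, ← hint]
  refine setIntegral_mono_on (integrableOn_Ioi_deriv_of_nonneg' hderiv hnonneg hlim)
    integrable_phi.integrableOn measurableSet_Ioi fun y hy ↦ ?_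
  have hy : 0 ≤ y := hx.trans (le_of_lt hy)
  refine mul_le_of_le_one_left (phi_pos y).le ((div_le_one (by positivity)).2 ?_)
  nlinarith

lemma exp_log_div_two {y : ℝ} (hy : 0 < y) : exp (log y / 2) = √y := by
  rw [sqrt_eq_rpow, rpow_def_of_pos hy, div_eq_mul_one_div]

lemma phi_sqrt_two_log_sub_log {t c : ℝ} (ht : 1 < t) (hc : 0 < c)
    (h : 0 ≤ 2 * log t - log (log t) - log c) :
    phi √(2 * log t - log (log t) - log c) = √(c * log t / (2 * π)) / t := by
  have hs : 0 < log t := log_pos ht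
  have ht0 : 0 < t := by linarith
  have hexp : -(2 * log t - log (log t) - log c) / 2 = -log t + log (log t) / 2 + log c / 2 := by
    ring
  rw [phi, sq_sqrt h, hexp, exp_add, exp_add, exp_neg, exp_log ht0, exp_log_div_two hs,
    exp_log_div_two hc, sqrt_div' _ (by positivity), sqrt_mul hc.le]
  field_simp

lemma PhiInv_one_sub_inv_le {t : ℝ} (ht : 1 < t) :
    PhiInv (1 - 1 / t) ≤ √(2 * log t - log (log t)) := by
  have hs : 0 < log t := log_pos ht
  have hA : log t + 1 ≤ 2 * log t - log (log t) := by linarith [log_le_sub_one_of_pos hs]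
  have hu : 0 < √(2 * log t - log (log t)) := sqrt_pos.2 (by linarith)
  have hphi := phi_sqrt_two_log_sub_log ht one_pos (by rw [log_one]; linarith)
  rw [log_one, sub_zero, one_mul] at hphi
  have hroot : √(log t / (2 * π)) ≤ √(2 * log t - log (log t)) :=
    sqrt_le_sqrt ((div_le_self hs.le (by nlinarith [pi_gt_three])).trans (by linarith))
  have ht0 : 0 < 1 / t := by positivity
  rw [PhiInv_le_iff (by rw [sub_pos, div_lt_one] <;> linarith) (by linarith)]
  suffices 1 - Phi √(2 * log t - log (log t)) ≤ 1 / t by linarith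
  calc 1 - Phi √(2 * log t - log (log t))
      ≤ phi √(2 * log t - log (log t)) / √(2 * log t - log (log t)) := one_sub_Phi_le hu
    _ ≤ 1 / t := by
      rw [hphi, div_le_iff₀ hu, div_mul_eq_mul_div, one_mul]
      gcongr

lemma le_PhiInv_one_sub_inv {t : ℝ} (ht : 2 ≤ t) :
    √(max (2 * log t - log (log t) - log (16 * π)) 0) ≤ PhiInv (1 - 1 / t) := by
  have hs : 1 / 2 < log t := by
    linarith [log_le_log two_pos ht, log_two_gt_d9]
  have ht1 : 1 / t ≤ 1 / 2 := one_div_le_one_div_of_le two_pos ht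
  have ht0 : 0 < 1 / t := by positivity
  rw [le_PhiInv_iff (by linarith) (by linarith)]
  rcases le_or_gt (2 * log t - log (log t) - log (16 * π)) 0 with hA | hA
  · rw [max_eq_right hA, sqrt_zero, Phi_zero]
    linarith
  rw [max_eq_left hA.le]
  set l := √(2 * log t - log (log t) - log (16 * π))
  have hphi : phi l = 2 * √(2 * log t) / t := by
    rw [phi_sqrt_two_log_sub_log (by linarith) (by positivity) hA.le,
      show 16 * π * log t / (2 * π) = 2 ^ 2 * (2 * log t) by field_simp; ring,
      sqrt_mul (by positivity), sqrt_sq zero_le_two]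
  have hl : l ≤ √(2 * log t) := by
    refine sqrt_le_sqrt ?_
    have : 0 ≤ log (log t) + log (16 * π) := by
      rw [← log_mul (by linarith) (by positivity)]
      exact log_nonneg (by nlinarith [pi_gt_three])
    linarith
  have hone : 1 ≤ √(2 * log t) := one_le_sqrt.2 (by linarith)
  suffices 1 / t ≤ 1 - Phi l by linarith
  calc 1 / t ≤ phi l / (1 + l) := by
        rw [hphi, le_div_iff₀ (by positivity), div_mul_eq_mul_div, one_mul]
        gcongr
        linarith
    _ ≤ 1 - Phi l := phi_div_one_add_le_one_sub_Phi (sqrt_nonneg _)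

/-- For any `t > 2`,
`√(max(2 log t − log log t − C, 0)) ≤ Φ⁻¹(1 − 1/t) ≤ √(2 log t − log log t)`,
where `C = 2 log 4 + log π`. -/
theorem quantile_bound (t : ℝ) (ht : 2 < t) :
    Real.sqrt (max (2 * Real.log t - Real.log (Real.log t)
        - (2 * Real.log 4 + Real.log Real.pi)) 0) ≤ PhiInv (1 - 1 / t) ∧
    PhiInv (1 - 1 / t) ≤ Real.sqrt (2 * Real.log t - Real.log (Real.log t)) := by
  have hC : 2 * log 4 + log π = log (16 * π) := by
    rw [log_mul (by norm_num) pi_ne_zero, show (16 : ℝ) = 4 ^ 2 by norm_num, log_pow]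
    push_cast
    ring
  rw [hC]
  exact ⟨le_PhiInv_one_sub_inv ht.le, PhiInv_one_sub_inv_le (by linarith)⟩
end

section
/- Let X₁,...,X_d be independent with each event {j ∈ Ŝ} depending only on X_j. Let S ⊆ [d] have cardinality s, and suppose min_{j∈S} P(j ∉ Ŝ) ≥ u and t = ∏_{j∈S} P(j ∈ Ŝ). Then P(S ⊄ Ŝ) ≥ t((1+u)^s − 1). -/
open MeasureTheory ProbabilityTheory Real Set

/-- If the membership events `A j = {j ∈ Ŝ}` are independent, `S` has cardinality `s`,
each `j ∈ S` satisfies `P(j ∉ Ŝ) ≥ u`, and `t = ∏_{j∈S} P(j ∈ Ŝ)`, then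
`P(S ⊄ Ŝ) ≥ t((1+u)^s − 1)`. -/
theorem union_lower_bound {Ω : Type*} [MeasurableSpace Ω] (μ : Measure Ω)
    [IsProbabilityMeasure μ] (d : ℕ) (A : Fin d → Set Ω)
    (hA : ∀ j, MeasurableSet (A j)) (hind : iIndepSet A μ)
    (S : Finset (Fin d)) (s : ℕ) (hcard : S.card = s)
    (u t : ℝ) (hu : 0 ≤ u)
    (hmin : ∀ j ∈ S, u ≤ (μ (A j)ᶜ).toReal)
    (ht : t = ∏ j ∈ S, (μ (A j)).toReal) :
    t * ((1 + u) ^ s - 1) ≤ (μ (⋃ j ∈ S, (A j)ᶜ)).toReal := by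
  have hmeasI : MeasurableSet (⋂ j ∈ S, A j) :=
    MeasurableSet.biInter (S.countable_toSet) (fun j _ => hA j)
  have hUeq : (⋃ j ∈ S, (A j)ᶜ) = (⋂ j ∈ S, A j)ᶜ := by
    simp [Set.compl_iInter]
  have hI : μ (⋂ j ∈ S, A j) = ∏ j ∈ S, μ (A j) := hind.meas_biInter S
  have hfin : ∀ j, μ (A j) ≠ ⊤ := fun j => measure_ne_top μ _
  have hItoReal : (μ (⋂ j ∈ S, A j)).toReal = t := by
    rw [hI, ENNReal.toReal_prod, ht]
  have hcompl : (μ (⋃ j ∈ S, (A j)ᶜ)).toReal = 1 - t := by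
    rw [hUeq, measure_compl hmeasI (measure_ne_top μ _)]
    rw [measure_univ, ENNReal.toReal_sub_of_le prob_le_one (by simp)]
    simp [hItoReal]
  rw [hcompl]
  -- key: t * (1+u)^s ≤ 1
  have hp : ∀ j ∈ S, (μ (A j)).toReal * (1 + u) ≤ 1 := by
    intro j hj
    have h1 : (μ (A j)).toReal ≤ 1 - u := by
      have hc : (μ (A j)ᶜ).toReal = 1 - (μ (A j)).toReal := by
        rw [measure_compl (hA j) (hfin j), measure_univ,
          ENNReal.toReal_sub_of_le prob_le_one (by simp)]
        simp
      have := hmin j hj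
      rw [hc] at this
      linarith
    nlinarith [ENNReal.toReal_nonneg (a := μ (A j))]
  have hkey : t * (1 + u) ^ s ≤ 1 := by
    rw [ht, ← hcard]
    calc (∏ j ∈ S, (μ (A j)).toReal) * (1 + u) ^ S.card
        = ∏ j ∈ S, ((μ (A j)).toReal * (1 + u)) := by
          rw [Finset.prod_mul_distrib, Finset.prod_const]
      _ ≤ ∏ j ∈ S, 1 := Finset.prod_le_prod
          (fun j _ => mul_nonneg ENNReal.toReal_nonneg (by linarith)) hp
      _ = 1 := by simp
  have htnn : 0 ≤ t := ht ▸ Finset.prod_nonneg fun j _ => ENNReal.toReal_nonneg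
  nlinarith
end

section
/- Let Z ~ N(0,1), θ ≥ 0, σ > 0, and u ≥ 0 with θ/σ > u. Define X = θ + σZ and L = max(X − uσ, 0)·1{X/σ > u}. Then E[θ − L] ≤ σ(1 + u) + (σ/√(2π)) exp(−(θ/σ − u)²/2). -/
open MeasureTheory ProbabilityTheory Real Set
open scoped ENNReal NNReal

lemma my_integral_comp_neg (f : ℝ → ℝ) : ∫ x, f (-x) = ∫ x, f x := by
  have A : MeasurableEmbedding fun x : ℝ => -x :=
    (Homeomorph.neg ℝ).isClosedEmbedding.measurableEmbedding
  rw [← A.integral_map, Measure.map_neg_eq_self (volume : Measure ℝ)]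

lemma my_pdf_eq (z : ℝ) :
    gaussianPDFReal 0 1 z = (Real.sqrt (2 * π))⁻¹ * Real.exp (-(1/2) * z ^ 2) := by
  simp only [gaussianPDFReal, NNReal.coe_one, mul_one, sub_zero]
  ring_nf

lemma my_gaussian_eq :
    gaussianReal 0 1 = volume.withDensity (fun x => ((gaussianPDFReal 0 1 x).toNNReal : ℝ≥0∞)) := by
  rw [gaussianReal_of_var_ne_zero _ one_ne_zero]
  rfl

lemma my_meas : Measurable (fun x => (gaussianPDFReal 0 1 x).toNNReal) :=
  (measurable_gaussianPDFReal 0 1).real_toNNReal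

lemma my_smul_eq (g : ℝ → ℝ) (x : ℝ) :
    (gaussianPDFReal 0 1 x).toNNReal • g x = gaussianPDFReal 0 1 x * g x := by
  rw [NNReal.smul_def, smul_eq_mul, Real.coe_toNNReal _ (gaussianPDFReal_nonneg 0 1 x)]

lemma my_integrable_mul : Integrable (fun x : ℝ => gaussianPDFReal 0 1 x * x) volume := by
  have h : (fun x : ℝ => gaussianPDFReal 0 1 x * x)
      = fun x : ℝ => (Real.sqrt (2 * π))⁻¹ * (x * Real.exp (-(1/2) * x ^ 2)) := by
    funext x; rw [my_pdf_eq]; ring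
  rw [h]
  exact (integrable_mul_exp_neg_mul_sq (by norm_num : (0:ℝ) < 1/2)).const_mul _

lemma my_integrable_id : Integrable (fun x : ℝ => x) (gaussianReal 0 1) := by
  rw [my_gaussian_eq, integrable_withDensity_iff_integrable_smul my_meas]
  have h : (fun x : ℝ => (gaussianPDFReal 0 1 x).toNNReal • x)
      = fun x : ℝ => gaussianPDFReal 0 1 x * x := by
    funext x; exact my_smul_eq (fun y => y) x
  rw [h]; exact my_integrable_mul

lemma my_integral_id : ∫ x, x ∂(gaussianReal 0 1) = 0 := by
  rw [my_gaussian_eq, integral_withDensity_eq_integral_smul my_meas]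
  have h : (fun x : ℝ => (gaussianPDFReal 0 1 x).toNNReal • x)
      = fun x : ℝ => gaussianPDFReal 0 1 x * x := by
    funext x; exact my_smul_eq (fun y => y) x
  rw [h]
  have hodd : ∀ x : ℝ, gaussianPDFReal 0 1 (-x) * (-x) = -(gaussianPDFReal 0 1 x * x) := by
    intro x
    rw [my_pdf_eq, my_pdf_eq]
    ring_nf
  have := my_integral_comp_neg (fun x => gaussianPDFReal 0 1 x * x)
  simp only [hodd, integral_neg] at this
  linarith

/-- For `Z ~ N(0,1)`, `X = θ + σZ`, `L = max(X − uσ, 0)·1{X/σ > u}` with `θ ≥ 0`,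
`σ > 0`, `u ≥ 0` and `θ/σ > u`,
`E[θ − L] ≤ σ(1 + u) + (σ/√(2π)) exp(−(θ/σ − u)²/2)`. -/
theorem onesided_length_bound (θ σ u : ℝ) (hθ : 0 ≤ θ) (hσ : 0 < σ) (hu : 0 ≤ u)
    (h : u < θ / σ) :
    ∫ z, (θ - (if u < (θ + σ * z) / σ then max (θ + σ * z - u * σ) 0 else 0))
        ∂(gaussianReal 0 1)
      ≤ σ * (1 + u) + σ / Real.sqrt (2 * Real.pi) * Real.exp (-(θ / σ - u) ^ 2 / 2) := by
  have hconv : ∀ z : ℝ, (θ - (if u < (θ + σ * z) / σ then max (θ + σ * z - u * σ) 0 else 0))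
      = θ - max (θ + σ * z - u * σ) 0 := by
    intro z
    by_cases hz : u < (θ + σ * z) / σ
    · simp [hz]
    · push_neg at hz
      have h1 : θ + σ * z - u * σ ≤ 0 := by
        have := (div_le_iff₀ hσ).mp hz
        nlinarith
      rw [if_neg (not_lt.mpr hz), max_eq_right h1]
  have hint2 : Integrable (fun z : ℝ => u * σ - σ * z) (gaussianReal 0 1) := by
    exact (integrable_const _).sub (my_integrable_id.const_mul σ)
  have hint1 : Integrable (fun z : ℝ => θ - max (θ + σ * z - u * σ) 0) (gaussianReal 0 1) := by
    apply (integrable_const θ).sub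
    have hg : Integrable (fun z : ℝ => θ + σ * z - u * σ) (gaussianReal 0 1) := by
      exact ((integrable_const θ).add (my_integrable_id.const_mul σ)).sub (integrable_const _)
    exact hg.sup (integrable_const 0)
  calc ∫ z, (θ - (if u < (θ + σ * z) / σ then max (θ + σ * z - u * σ) 0 else 0))
        ∂(gaussianReal 0 1)
      = ∫ z, (θ - max (θ + σ * z - u * σ) 0) ∂(gaussianReal 0 1) := by
        congr 1; funext z; exact hconv z
    _ ≤ ∫ z, (u * σ - σ * z) ∂(gaussianReal 0 1) := by
        refine integral_mono hint1 hint2 (fun z => ?_)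
        have : θ + σ * z - u * σ ≤ max (θ + σ * z - u * σ) 0 := le_max_left _ _
        simp only
        linarith
    _ = u * σ - σ * ∫ z, z ∂(gaussianReal 0 1) := by
        rw [integral_sub (integrable_const _) (my_integrable_id.const_mul σ),
          integral_const, integral_const_mul]
        simp
    _ ≤ σ * (1 + u) + σ / Real.sqrt (2 * Real.pi) * Real.exp (-(θ / σ - u) ^ 2 / 2) := by
        rw [my_integral_id]
        have h1 : 0 ≤ σ / Real.sqrt (2 * Real.pi) * Real.exp (-(θ / σ - u) ^ 2 / 2) := by
          positivity
        nlinarith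
end

section
/- As s → ∞, with C_{s,α'} = 2√(π log(s/α')) and fixed 0 < α' < 1, we have s(1 − Φ(√(2 log(s/(C_{s,α'}α'))))) → α'. -/
/-!
For `y > 0` the Gaussian tail integral `T(y) = ∫_y^∞ e^{-t²/2} dt` satisfies
`e^{-y²/2}/y ≤ (1 + y⁻²) T(y)` and `T(y) ≤ e^{-y²/2}/y`: compare the integrand with
`(1 + t⁻²) e^{-t²/2}` and `t e^{-t²/2} / y`, whose antiderivatives are explicit.
Hence `1 - Φ(y) ~ φ(y)/y`.

Write `L = log (s/α')` and `C(u) = 2√(πu)`, so that the threshold is `y = √(2M)` with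
`M = L - log C(L)`. Then `s e^{-y²/2} = α' C(L)` and `√(2π) y = C(M)`, hence
`s (1 - Φ(y)) ~ α' C(L) / C(M) = α' √(L/M) → α'`, because `log C(L) = o(L)`.
-/

open MeasureTheory ProbabilityTheory Real Filter

open Asymptotics Set Topology

lemma hasDerivAt_exp_neg_sq_div_two (x : ℝ) :
    HasDerivAt (fun t : ℝ => exp (-t ^ 2 / 2)) (-x * exp (-x ^ 2 / 2)) x := by
  have h : HasDerivAt (fun t : ℝ => -t ^ 2 / 2) (-x) x :=
    ((hasDerivAt_pow 2 x).neg.div_const 2).congr_deriv (by push_cast; ring)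
  exact h.exp.congr_deriv (mul_comm _ _)

lemma tendsto_exp_neg_sq_div_two_atTop :
    Tendsto (fun t : ℝ => exp (-t ^ 2 / 2)) atTop (𝓝 0) :=
  tendsto_exp_atBot.comp <|
    (tendsto_neg_atTop_atBot.comp (tendsto_pow_atTop two_ne_zero)).atBot_div_const two_pos

lemma integrable_exp_neg_sq_div_two : Integrable fun t : ℝ => exp (-t ^ 2 / 2) := by
  convert integrable_exp_neg_mul_sq (b := 1 / 2) (by norm_num) using 3
  ring

lemma integrable_mul_exp_neg_sq_div_two : Integrable fun t : ℝ => t * exp (-t ^ 2 / 2) := by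
  convert integrable_mul_exp_neg_mul_sq (b := 1 / 2) (by norm_num) using 4
  ring

lemma integral_Ioi_mul_exp_neg_sq_div_two (y : ℝ) :
    ∫ t in Ioi y, t * exp (-t ^ 2 / 2) = exp (-y ^ 2 / 2) := by
  have := integral_Ioi_of_hasDerivAt_of_tendsto' (a := y)
    (fun x _ => (hasDerivAt_exp_neg_sq_div_two x).neg.congr_deriv (by ring))
    integrable_mul_exp_neg_sq_div_two.integrableOn tendsto_exp_neg_sq_div_two_atTop.neg
  simpa using this

lemma integrableOn_one_add_inv_sq_mul_exp_neg_sq_div_two {y : ℝ} (hy : 0 < y) :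
    IntegrableOn (fun t => (1 + t⁻¹ ^ 2) * exp (-t ^ 2 / 2)) (Ioi y) := by
  refine (integrable_exp_neg_sq_div_two.const_mul (1 + y⁻¹ ^ 2)).integrableOn.mono'
    (by fun_prop) ?_
  filter_upwards [ae_restrict_mem measurableSet_Ioi] with t (ht : y < t)
  have := hy.trans ht
  rw [norm_of_nonneg (by positivity)]
  gcongr

lemma integral_Ioi_one_add_inv_sq_mul_exp_neg_sq_div_two {y : ℝ} (hy : 0 < y) :
    ∫ t in Ioi y, (1 + t⁻¹ ^ 2) * exp (-t ^ 2 / 2) = exp (-y ^ 2 / 2) / y := by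
  have hderiv (x : ℝ) (hx : x ∈ Ici y) : HasDerivAt (fun t => -(exp (-t ^ 2 / 2) * t⁻¹))
      ((1 + x⁻¹ ^ 2) * exp (-x ^ 2 / 2)) x := by
    have hx0 : x ≠ 0 := (hy.trans_le hx).ne'
    refine ((hasDerivAt_exp_neg_sq_div_two x).mul (hasDerivAt_inv hx0)).neg.congr_deriv ?_
    field_simp
    ring
  have hlim : Tendsto (fun t => -(exp (-t ^ 2 / 2) * t⁻¹)) atTop (𝓝 0) := by
    simpa using (tendsto_exp_neg_sq_div_two_atTop.mul tendsto_inv_atTop_zero).neg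
  rw [integral_Ioi_of_hasDerivAt_of_tendsto' hderiv
    (integrableOn_one_add_inv_sq_mul_exp_neg_sq_div_two hy) hlim]
  ring

lemma integral_Ioi_exp_neg_sq_div_two_le {y : ℝ} (hy : 0 < y) :
    ∫ t in Ioi y, exp (-t ^ 2 / 2) ≤ exp (-y ^ 2 / 2) / y := by
  calc ∫ t in Ioi y, exp (-t ^ 2 / 2)
      ≤ ∫ t in Ioi y, y⁻¹ * (t * exp (-t ^ 2 / 2)) := by
        refine setIntegral_mono_on integrable_exp_neg_sq_div_two.integrableOn
          (integrable_mul_exp_neg_sq_div_two.const_mul _).integrableOn measurableSet_Ioi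
          fun t (ht : y < t) => ?_
        rw [← mul_assoc]
        exact le_mul_of_one_le_left (by positivity) ((one_le_inv_mul₀ hy).2 ht.le)
    _ = exp (-y ^ 2 / 2) / y := by
        rw [integral_const_mul, integral_Ioi_mul_exp_neg_sq_div_two, inv_mul_eq_div]

lemma div_le_one_add_inv_sq_mul_integral_Ioi_exp_neg_sq_div_two {y : ℝ} (hy : 0 < y) :
    exp (-y ^ 2 / 2) / y ≤ (1 + y⁻¹ ^ 2) * ∫ t in Ioi y, exp (-t ^ 2 / 2) := by
  rw [← integral_Ioi_one_add_inv_sq_mul_exp_neg_sq_div_two hy, ← integral_const_mul]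
  refine setIntegral_mono_on (integrableOn_one_add_inv_sq_mul_exp_neg_sq_div_two hy)
    (integrable_exp_neg_sq_div_two.const_mul _).integrableOn measurableSet_Ioi
    fun t (ht : y < t) => ?_
  have := hy.trans ht
  gcongr

theorem isEquivalent_integral_Ioi_exp_neg_sq_div_two :
    (fun y => ∫ t in Ioi y, exp (-t ^ 2 / 2)) ~[atTop] fun y => exp (-y ^ 2 / 2) / y := by
  refine isEquivalent_of_tendsto_one ?_
  have hlower : Tendsto (fun y : ℝ => (1 + y⁻¹ ^ 2)⁻¹) atTop (𝓝 1) := by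
    simpa using (((tendsto_inv_atTop_zero (𝕜 := ℝ)).pow 2).const_add 1).inv₀ (by norm_num)
  refine tendsto_of_tendsto_of_tendsto_of_le_of_le' hlower tendsto_const_nhds ?_ ?_ <;>
    filter_upwards [eventually_gt_atTop 0] with y hy <;>
    simp only [Pi.div_apply]
  · rw [le_div_iff₀ (by positivity), inv_mul_le_iff₀ (by positivity)]
    exact div_le_one_add_inv_sq_mul_integral_Ioi_exp_neg_sq_div_two hy
  · exact div_le_one_of_le₀ (integral_Ioi_exp_neg_sq_div_two_le hy) (by positivity)

lemma one_sub_Phi_eq (y : ℝ) :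
    1 - Phi y = (√(2 * π))⁻¹ * ∫ t in Ioi y, exp (-t ^ 2 / 2) := by
  have hpos : 0 ≤ ∫ t in Ioi y, gaussianPDFReal 0 1 t :=
    setIntegral_nonneg measurableSet_Ioi fun t _ => gaussianPDFReal_nonneg 0 1 t
  rw [Phi, ← measureReal_def, ← probReal_compl_eq_one_sub measurableSet_Iic, compl_Iic,
    measureReal_def, gaussianReal_apply_eq_integral 0 one_ne_zero, ENNReal.toReal_ofReal hpos,
    ← integral_const_mul]
  simp [gaussianPDFReal]

theorem isEquivalent_one_sub_Phi :
    (fun y => 1 - Phi y) ~[atTop] fun y => exp (-y ^ 2 / 2) / (√(2 * π) * y) := by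
  have := (IsEquivalent.refl (u := fun _ : ℝ => (√(2 * π))⁻¹)).mul
    isEquivalent_integral_Ioi_exp_neg_sq_div_two
  convert this using 1 <;> ext y
  · exact one_sub_Phi_eq y
  · simp only [Pi.mul_apply]; field_simp

lemma isLittleO_log_two_mul_sqrt_pi_mul : (fun u => log (2 * √(π * u))) =o[atTop] id := by
  have h : (fun u => log 2 + 2⁻¹ * (log π + log u)) =o[atTop] id :=
    (isLittleO_const_id_atTop _).add
      (((isLittleO_const_id_atTop _).add isLittleO_log_id_atTop).const_mul_left 2⁻¹)
  refine h.congr' ?_ EventuallyEq.rfl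
  filter_upwards [eventually_gt_atTop 0] with u hu
  rw [log_mul two_ne_zero (by positivity), log_sqrt (by positivity),
    log_mul pi_ne_zero hu.ne']
  ring

lemma isEquivalent_sub_log_two_mul_sqrt_pi_mul :
    (fun u => u - log (2 * √(π * u))) ~[atTop] id :=
  IsEquivalent.refl.sub_isLittleO isLittleO_log_two_mul_sqrt_pi_mul

theorem tendsto_exp_mul_one_sub_Phi_sqrt :
    Tendsto (fun u => exp u * (1 - Phi (√(2 * (u - log (2 * √(π * u))))))) atTop (𝓝 1) := by
  set M := fun u : ℝ => u - log (2 * √(π * u)) with hM_def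
  have hM : M ~[atTop] id := isEquivalent_sub_log_two_mul_sqrt_pi_mul
  have hMtop : Tendsto M atTop atTop := hM.symm.tendsto_atTop tendsto_id
  have hY : Tendsto (fun u => √(2 * M u)) atTop atTop :=
    tendsto_sqrt_atTop.comp (hMtop.const_mul_atTop two_pos)
  have hratio : Tendsto (fun u => √(u / M u)) atTop (𝓝 1) := by
    have := (continuous_sqrt.tendsto 1).comp
      ((isEquivalent_iff_tendsto_one (hMtop.eventually_ne_atTop 0)).1 hM.symm)
    rwa [sqrt_one] at this
  refine ((IsEquivalent.refl (u := exp)).mul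
    (isEquivalent_one_sub_Phi.comp_tendsto hY)).symm.tendsto_nhds (hratio.congr' ?_)
  filter_upwards [eventually_gt_atTop 0, hMtop.eventually_gt_atTop 0] with u hu hMu
  have hnum : exp u * exp (-√(2 * M u) ^ 2 / 2) = 2 * √(π * u) := by
    rw [sq_sqrt (by positivity), ← exp_add, hM_def]
    ring_nf
    exact exp_log (by positivity)
  have hden : √(2 * π) * √(2 * M u) = 2 * √(π * M u) := by
    rw [← sqrt_mul (by positivity), show 2 * π * (2 * M u) = 2 ^ 2 * (π * M u) by ring,
      sqrt_mul (by positivity), sqrt_sq zero_le_two]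
  simp only [Pi.mul_apply, Function.comp_apply]
  rw [mul_div_assoc', hnum, hden, mul_div_mul_left _ _ two_ne_zero,
    ← sqrt_div' _ (by positivity), mul_div_mul_left _ _ pi_ne_zero]

theorem bonferroni_limit_general (α' : ℝ) (h0 : 0 < α') :
    Tendsto (fun s : ℕ =>
      (s : ℝ) * (1 - Phi (Real.sqrt (2 * Real.log ((s : ℝ) /
        (2 * Real.sqrt (Real.pi * Real.log ((s : ℝ) / α')) * α'))))))
      atTop (nhds α') := by
  have hs : Tendsto (fun s : ℕ => (s : ℝ) / α') atTop atTop :=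
    tendsto_natCast_atTop_atTop.atTop_div_const h0
  have hlim := (tendsto_exp_mul_one_sub_Phi_sqrt.comp (tendsto_log_atTop.comp hs)).const_mul α'
  rw [mul_one] at hlim
  refine hlim.congr' ?_
  filter_upwards [hs.eventually_gt_atTop 1] with s hs1
  have hL := log_pos hs1
  have hlog : log (s / (2 * √(π * log (s / α')) * α')) =
      log (s / α') - log (2 * √(π * log (s / α'))) := by
    rw [mul_comm _ α', ← div_div, log_div (by positivity) (by positivity)]
  simp only [Function.comp_apply]
  rw [hlog, ← mul_assoc, exp_log (by positivity), mul_div_cancel₀ _ h0.ne']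

/-- With `C_{s,α'} = 2√(π log(s/α'))` and fixed `0 < α' < 1`, as `s → ∞`,
`s (1 − Φ(√(2 log(s/(C_{s,α'} α'))))) → α'`. -/
theorem bonferroni_limit (α' : ℝ) (h0 : 0 < α') (h1 : α' < 1) :
    Tendsto (fun s : ℕ =>
      (s : ℝ) * (1 - Phi (Real.sqrt (2 * Real.log ((s : ℝ) /
        (2 * Real.sqrt (Real.pi * Real.log ((s : ℝ) / α')) * α'))))))
      atTop (nhds α') :=
  bonferroni_limit_general α' h0
end
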